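/- In the setting of the rank-two algebra A = O·1 ⊕ μ·X over a Dedekind domain O with μ² = (z) and X² = z⁻¹ā X + z⁻¹b̄, the kernel of the multiplication map m : A ⊗_O A → A is isomorphic as an O-module to A ⊗_O μ, via the map sending a ⊗ u to the action of left multiplication by a on X_u = uX ⊗ 1 − 1 ⊗ uX. -/

import Mathlib

/-- The element of `K⁴` (coordinates `1⊗1, 1⊗X, X⊗1, X⊗X`) representing `p ⊗ q`. -/
def tens {K : Type*} [Field K] (p q : K × K) : Fin 4 → K :=
  ![p.1 * q.1, p.1 * q.2, p.2 * q.1, p.2 * q.2]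

/-- The multiplication map `m : K² ⊗ K² → K²` for `X² = aX + b`, in coordinates. -/
noncomputable def mulMap {K : Type*} [Field K] (a b : K) : (Fin 4 → K) →ₗ[K] K × K :=
  LinearMap.prod
    ((LinearMap.proj (0 : Fin 4) : (Fin 4 → K) →ₗ[K] K) +
      b • (LinearMap.proj (3 : Fin 4) : (Fin 4 → K) →ₗ[K] K))
    ((LinearMap.proj (1 : Fin 4) : (Fin 4 → K) →ₗ[K] K) +
      (LinearMap.proj (2 : Fin 4) : (Fin 4 → K) →ₗ[K] K) +
      a • (LinearMap.proj (3 : Fin 4) : (Fin 4 → K) →ₗ[K] K))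

/-- `X_v = vX ⊗ 1 − 1 ⊗ vX` in coordinates. -/
def Xel {K : Type*} [Field K] (v : K) : Fin 4 → K := ![0, -v, v, 0]

/-- Left multiplication `ℓ_x` by `x = x₁·1 + x₂·X` on the first tensor factor,
in the coordinates `1⊗1, 1⊗X, X⊗1, X⊗X`, for `X² = aX + b`. -/
def ellOp {K : Type*} [Field K] (a b : K) (x : K × K) (c : Fin 4 → K) : Fin 4 → K :=
  ![x.1 * c 0 + b * (x.2 * c 2), x.1 * c 1 + b * (x.2 * c 3),
    x.2 * c 0 + x.1 * c 2 + a * (x.2 * c 2), x.2 * c 1 + x.1 * c 3 + a * (x.2 * c 3)]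

/-!
The map `x ⊗ v ↦ ℓ_x(X_v)` is bilinear and lands in `ker m`. Its coefficients at `1 ⊗ X` and
`X ⊗ X` are `-(v • x)`, so up to sign it lifts the multiplication `A ⊗ μ → A ⊆ K²`, which is
injective because `A` is torsion-free, hence flat, over the Dedekind domain `O`. An element of
`ker m` is determined by those two coefficients, and for an element of `A ⊗ A` they lie in
`μ × μ²`, which the image of `A ⊗ μ` covers; this gives surjectivity. Finally
`ℓ_x(X_v) = (b x₂ v, x₁ v + a x₂ v) ⊗ 1 - x ⊗ vX`, and the first factor lies in `A` because
`z⁻¹ μ² ⊆ O` and `ā ∈ μ`.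
-/

open TensorProduct

section Coordinates

variable {K : Type*} [Field K]

variable (K) in
/-- The coefficients of `1 ⊗ X` and `X ⊗ X`. -/
def xCoords : (Fin 4 → K) →ₗ[K] K × K :=
  (LinearMap.proj 1).prod (LinearMap.proj 3)

lemma mulMap_apply (a b : K) (w : Fin 4 → K) :
    mulMap a b w = (w 0 + b * w 3, w 1 + w 2 + a * w 3) := rfl

lemma eq_of_mulMap_eq_of_xCoords_eq {a b : K} {w w' : Fin 4 → K}
    (hm : mulMap a b w = mulMap a b w') (hx : xCoords K w = xCoords K w') : w = w' := by
  simp only [mulMap_apply, Prod.mk.injEq] at hm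
  have h1 : w 1 = w' 1 := congrArg Prod.fst hx
  have h3 : w 3 = w' 3 := congrArg Prod.snd hx
  funext i
  fin_cases i
  · show w 0 = w' 0
    linear_combination hm.1 - b * h3
  · exact h1
  · show w 2 = w' 2
    linear_combination hm.2 - h1 - a * h3
  · exact h3

lemma mulMap_ellOp_Xel (a b : K) (x : K × K) (v : K) :
    mulMap a b (ellOp a b x (Xel v)) = 0 := by
  simp only [mulMap_apply, ellOp, Xel]
  ext <;> simp

lemma xCoords_ellOp_Xel (a b : K) (x : K × K) (v : K) :
    xCoords K (ellOp a b x (Xel v)) = -(v • x) := by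
  ext <;> simp [xCoords, ellOp, Xel, mul_comm]

lemma ellOp_Xel_eq_tens_sub (a b : K) (x : K × K) (v : K) :
    ellOp a b x (Xel v) =
      tens (b * (x.2 * v), x.1 * v + a * (x.2 * v)) (1, 0) - tens x (0, v) := by
  funext i
  fin_cases i <;> simp [ellOp, Xel, tens]

variable (K) in
def ellXel (a b : K) : (K × K) →ₗ[K] K →ₗ[K] (Fin 4 → K) :=
  LinearMap.mk₂ K (fun x v => ellOp a b x (Xel v))
    (by intros; funext i; fin_cases i <;> simp [ellOp, Xel] <;> ring)
    (by intros; funext i; fin_cases i <;> simp [ellOp, Xel] <;> ring)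
    (by intros; funext i; fin_cases i <;> simp [ellOp, Xel] <;> ring)
    (by intros; funext i; fin_cases i <;> simp [ellOp, Xel] <;> ring)

end Coordinates

lemma ne_zero_of_mul_self_eq_span {O : Type*} [CommRing O] [NoZeroDivisors O] {μ : Ideal O}
    {z : O} (hμ : μ ≠ ⊥) (hsq : μ * μ = Ideal.span {z}) : z ≠ 0 := by
  rintro rfl
  rw [Ideal.span_singleton_eq_bot.mpr rfl, Ideal.mul_eq_bot, or_self] at hsq
  exact hμ hsq

section SMulTensor

variable {R M : Type*} [CommRing R] [AddCommGroup M] [Module R M] (N : Submodule R M)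
  (I : Ideal R)

def smulTensor : N ⊗[R] I →ₗ[R] M :=
  N.subtype ∘ₗ (TensorProduct.rid R N).toLinearMap ∘ₗ I.subtype.lTensor N

@[simp]
lemma smulTensor_tmul (x : N) (v : I) : smulTensor N I (x ⊗ₜ v) = (v : R) • (x : M) := by
  simp [smulTensor]

lemma smulTensor_injective [Module.Flat R N] : Function.Injective (smulTensor N I) :=
  N.injective_subtype.comp <| (TensorProduct.rid R N).injective.comp <|
    Module.Flat.lTensor_preserves_injective_linearMap _ I.injective_subtype

end SMulTensor

section Lattice

variable {O : Type*} (K : Type*) [CommRing O] [Field K] [Algebra O K]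

/-- The order `A = O·1 ⊕ μ·X`, realized as `O × μ` inside `K × K`. -/
def rankTwoOrder (μ : Ideal O) : Submodule O (K × K) :=
  (LinearMap.range (Algebra.linearMap O K)).prod (Submodule.map (Algebra.linearMap O K) μ)

/-- `A ⊗_O A`, realized inside `K⁴ = (K × K) ⊗_K (K × K)`. -/
def tensorSquare (μ : Ideal O) : Submodule O (Fin 4 → K) :=
  Submodule.span O {w | ∃ p ∈ rankTwoOrder K μ, ∃ q ∈ rankTwoOrder K μ, w = tens p q}

noncomputable def kerMul (a b : K) (μ : Ideal O) : Submodule O (Fin 4 → K) :=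
  tensorSquare K μ ⊓ LinearMap.ker ((mulMap a b).restrictScalars O)

def ellXelLift (a b : K) (μ : Ideal O) : rankTwoOrder K μ ⊗[O] μ →ₗ[O] (Fin 4 → K) :=
  lift (((ellXel K a b).restrictScalars₁₂ O O).compl₁₂ (rankTwoOrder K μ).subtype
    ((Algebra.linearMap O K) ∘ₗ μ.subtype))

variable {K} {μ : Ideal O}

lemma ellXelLift_tmul (a b : K) (x : rankTwoOrder K μ) (v : μ) :
    ellXelLift K a b μ (x ⊗ₜ v) = ellOp a b x (Xel (algebraMap O K v)) := rfl

lemma algebraMap_mem_map {u : O} (hu : u ∈ μ) :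
    algebraMap O K u ∈ Submodule.map (Algebra.linearMap O K) μ :=
  ⟨u, hu, rfl⟩

lemma mem_rankTwoOrder_iff {x : K × K} :
    x ∈ rankTwoOrder K μ ↔ ∃ r u, u ∈ μ ∧ x = (algebraMap O K r, algebraMap O K u) := by
  refine ⟨fun hx => ?_, ?_⟩
  · obtain ⟨⟨r, hr⟩, u, hu, hu'⟩ := Submodule.mem_prod.mp hx
    exact ⟨r, u, hu, Prod.ext hr.symm hu'.symm⟩
  · rintro ⟨r, u, hu, rfl⟩
    exact Submodule.mem_prod.mpr ⟨⟨r, rfl⟩, algebraMap_mem_map hu⟩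

lemma mulMap_ellXelLift (a b : K) (ξ : rankTwoOrder K μ ⊗[O] μ) :
    mulMap a b (ellXelLift K a b μ ξ) = 0 := by
  induction ξ using TensorProduct.induction_on with
  | zero => simp
  | tmul x v => exact mulMap_ellOp_Xel a b x _
  | add ξ η hξ hη => simp [hξ, hη]

lemma range_ellXelLift_le_kerMul {z abar bbar : O} (hsq : μ * μ = Ideal.span {z})
    (hz : algebraMap O K z ≠ 0) (habar : abar ∈ μ) :
    let a := algebraMap O K abar / algebraMap O K z
    let b := algebraMap O K bbar / algebraMap O K z
    LinearMap.range (ellXelLift K a b μ) ≤ kerMul K a b μ := by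
  intro a b
  rintro _ ⟨ξ, rfl⟩
  induction ξ using TensorProduct.induction_on with
  | zero => simp
  | add ξ η hξ hη => simpa using add_mem hξ hη
  | tmul x v =>
    refine ⟨?_, mulMap_ellOp_Xel a b x _⟩
    obtain ⟨r, u, hu, hx⟩ := mem_rankTwoOrder_iff.mp x.2
    obtain ⟨t, ht⟩ := Ideal.mem_span_singleton'.mp (hsq ▸ Ideal.mul_mem_mul hu v.2)
    have hdiv : ∀ c : O, algebraMap O K c / algebraMap O K z *
        (algebraMap O K u * algebraMap O K v) = algebraMap O K (c * t) := by
      intro c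
      rw [← map_mul, ← ht, map_mul, map_mul]
      field_simp
    have hp : (b * ((x : K × K).2 * algebraMap O K v),
        (x : K × K).1 * algebraMap O K v + a * ((x : K × K).2 * algebraMap O K v)) ∈
          rankTwoOrder K μ := by
      refine mem_rankTwoOrder_iff.mpr ⟨bbar * t, r * v + abar * t,
        add_mem (μ.mul_mem_left r v.2) (μ.mul_mem_right t habar), ?_⟩
      simp only [hx, a, b, hdiv, map_add, map_mul]
    rw [SetLike.mem_coe, ellXelLift_tmul, ellOp_Xel_eq_tens_sub]
    refine sub_mem (Submodule.subset_span ⟨_, hp, (1, 0), ?_, rfl⟩)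
      (Submodule.subset_span ⟨x, x.2, (0, _), ?_, rfl⟩)
    · exact mem_rankTwoOrder_iff.mpr ⟨1, 0, μ.zero_mem, by simp⟩
    · exact mem_rankTwoOrder_iff.mpr ⟨0, v, v.2, by simp⟩

lemma xCoords_comp_ellXelLift (a b : K) :
    (xCoords K).restrictScalars O ∘ₗ ellXelLift K a b μ = -smulTensor (rankTwoOrder K μ) μ := by
  refine TensorProduct.ext' fun x v => ?_
  simp [ellXelLift_tmul, xCoords_ellOp_Xel, algebraMap_smul]

lemma ellXelLift_injective [IsDedekindDomain O] [IsFractionRing O K] (a b : K) :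
    Function.Injective (ellXelLift K a b μ) := by
  refine Function.Injective.of_comp (f := (xCoords K).restrictScalars O) ?_
  rw [← LinearMap.coe_comp, xCoords_comp_ellXelLift]
  exact neg_injective.comp (smulTensor_injective _ μ)

lemma tensorSquare_le_comap_xCoords :
    tensorSquare K μ ≤ ((Submodule.map (Algebra.linearMap O K) μ).prod
      (Submodule.map (Algebra.linearMap O K) (μ * μ))).comap ((xCoords K).restrictScalars O) := by
  refine Submodule.span_le.mpr ?_
  rintro _ ⟨p, hp, q, hq, rfl⟩
  obtain ⟨r, u, hu, rfl⟩ := mem_rankTwoOrder_iff.mp hp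
  obtain ⟨-, v, hv, rfl⟩ := mem_rankTwoOrder_iff.mp hq
  refine Submodule.mem_prod.mpr ⟨?_, ?_⟩ <;> simp only [xCoords, tens, ← map_mul]
  · exact algebraMap_mem_map (μ.mul_mem_left r hv)
  · exact algebraMap_mem_map (Ideal.mul_mem_mul hu hv)

lemma prod_le_range_smulTensor :
    (Submodule.map (Algebra.linearMap O K) μ).prod
        (Submodule.map (Algebra.linearMap O K) (μ * μ)) ≤
      LinearMap.range (smulTensor (rankTwoOrder K μ) μ) := by
  have hsmul : ∀ x ∈ rankTwoOrder K μ, ∀ v ∈ μ,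
      v • x ∈ LinearMap.range (smulTensor (rankTwoOrder K μ) μ) :=
    fun x hx v hv => ⟨⟨x, hx⟩ ⊗ₜ ⟨v, hv⟩, smulTensor_tmul _ _ _ _⟩
  rintro ⟨_, _⟩ ⟨⟨s, hs, rfl⟩, m, hm, rfl⟩
  rw [← add_zero (Algebra.linearMap O K s), ← zero_add (Algebra.linearMap O K m),
    ← Prod.mk_add_mk]
  refine add_mem ?_ ?_
  · simpa [Algebra.smul_def] using
      hsmul (1, 0) (mem_rankTwoOrder_iff.mpr ⟨1, 0, μ.zero_mem, by simp⟩) s hs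
  · refine Submodule.mul_induction_on hm (fun u hu v hv => ?_) (fun m m' h h' => ?_)
    · simpa [Algebra.smul_def, mul_comm] using
        hsmul (0, algebraMap O K u) (mem_rankTwoOrder_iff.mpr ⟨0, u, hu, by simp⟩) v hv
    · simpa using add_mem h h'

lemma kerMul_le_range_ellXelLift (a b : K) :
    kerMul K a b μ ≤ LinearMap.range (ellXelLift K a b μ) := by
  rintro w ⟨hw, hwm⟩
  have hrange : LinearMap.range ((xCoords K).restrictScalars O ∘ₗ ellXelLift K a b μ) =
      LinearMap.range (smulTensor (rankTwoOrder K μ) μ) := by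
    rw [xCoords_comp_ellXelLift, LinearMap.range_neg]
  obtain ⟨ξ, hξ⟩ := hrange ▸ prod_le_range_smulTensor (tensorSquare_le_comap_xCoords hw)
  refine ⟨ξ, eq_of_mulMap_eq_of_xCoords_eq (a := a) (b := b) ?_ hξ⟩
  rw [mulMap_ellXelLift]
  exact (LinearMap.mem_ker.mp hwm).symm

end Lattice

open TensorProduct in
theorem stmt8_general (O : Type*) [CommRing O] [IsDedekindDomain O]
    (K : Type*) [Field K] [Algebra O K] [IsFractionRing O K]
    (μ : Ideal O) (hμ : μ ≠ ⊥)
    (z : O) (hsq : μ * μ = Ideal.span {z})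
    (abar bbar : O) (habar : abar ∈ μ) :
    let f : O → K := algebraMap O K
    let a : K := f abar / f z
    let b : K := f bbar / f z
    let O1 : Submodule O K := LinearMap.range (Algebra.linearMap O K)
    let μK : Submodule O K := Submodule.map (Algebra.linearMap O K) μ
    let A : Submodule O (K × K) := O1.prod μK
    let AA : Submodule O (Fin 4 → K) :=
      Submodule.span O {w | ∃ p ∈ A, ∃ q ∈ A, w = tens p q}
    let Kerm : Submodule O (Fin 4 → K) :=
      AA ⊓ LinearMap.ker ((mulMap a b).restrictScalars O)
    ∃ e : (A ⊗[O] μ) ≃ₗ[O] Kerm,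
      ∀ (x : A) (v : μ),
        (e (x ⊗ₜ v) : Fin 4 → K) = ellOp a b (x : K × K) (Xel (f v)) := by
  intro f a b O1 μK A AA Kerm
  have hz : f z ≠ 0 :=
    (map_ne_zero_iff _ (IsFractionRing.injective O K)).mpr (ne_zero_of_mul_self_eq_span hμ hsq)
  have hrange : LinearMap.range (ellXelLift K a b μ) = kerMul K a b μ :=
    le_antisymm (range_ellXelLift_le_kerMul hsq hz habar) (kerMul_le_range_ellXelLift a b)
  exact ⟨(LinearEquiv.ofInjective _ (ellXelLift_injective a b)).trans
    (LinearEquiv.ofEq _ _ hrange), fun x v => rfl⟩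

open TensorProduct in
/-- `ker(m) ≅ A ⊗_O μ` as `O`-modules, via `a ⊗ u ↦ ℓ_a(X_u)`, for the rank-two
algebra `A = O·1 ⊕ μ·X` with `μ² = (z)` and `X² = z⁻¹ā X + z⁻¹b̄`, `ā ∈ μ`, `b̄ ∈ O`;
`A ⊗ A` is realized as the span `AA` of the `tens p q` inside `K⁴` and `ker(m)` as
`AA ⊓ ker(mulMap)`. -/
theorem stmt8 (O : Type*) [CommRing O] [IsDomain O] [IsDedekindDomain O]
    (K : Type*) [Field K] [Algebra O K] [IsFractionRing O K]
    (μ : Ideal O) (hμ : μ ≠ ⊥)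
    (z : O) (hsq : μ * μ = Ideal.span {z})
    (abar bbar : O) (habar : abar ∈ μ) :
    let f : O → K := algebraMap O K
    let a : K := f abar / f z
    let b : K := f bbar / f z
    let O1 : Submodule O K := LinearMap.range (Algebra.linearMap O K)
    let μK : Submodule O K := Submodule.map (Algebra.linearMap O K) μ
    let A : Submodule O (K × K) := O1.prod μK
    let AA : Submodule O (Fin 4 → K) :=
      Submodule.span O {w | ∃ p ∈ A, ∃ q ∈ A, w = tens p q}
    let Kerm : Submodule O (Fin 4 → K) :=
      AA ⊓ LinearMap.ker ((mulMap a b).restrictScalars O)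
    ∃ e : (A ⊗[O] μ) ≃ₗ[O] Kerm,
      ∀ (x : A) (v : μ),
        (e (x ⊗ₜ v) : Fin 4 → K) = ellOp a b (x : K × K) (Xel (f v)) :=
  stmt8_general O K μ hμ z hsq abar bbar habar
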